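/- The Barnes G-function satisfies the functional equation G(z+1) = Γ(z)·G(z) for every complex number z that is not a nonpositive integer, where G(z+1) = (2π)^{z/2} exp(−((γ+1)z² + z)/2) ∏_{n=1}^{∞} (1 + z/n)^n exp(−z + z²/(2n)) and Γ is the Gamma function. -/

import Mathlib

/-!
Write `w = z / (n + 1)`. Then `barnesFactor z n = exp ((n + 1) (log (1 + w) - w + w ^ 2 / 2))`, and
the exponent is `O(1 / n ^ 2)`, so the product converges for every `z`. The quotient of the `N`-th
partial products at `z` and at `z - 1` telescopes to
`(z + N) ^ N / ∏_{j<N} (z + j) · exp (-N + (z - 1/2) H_N)`. Comparing it with Gauss's sequence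
`GammaSeq z N → Γ(z)`, and using `(1 + z/N) ^ N → e ^ z`, `H_N - log N → γ` and Stirling's formula,
it tends to `Γ(z) e ^ z e ^ ((z - 1/2) γ) / √(2π)`; these constants are exactly what separates the
prefactors of `G(z + 1)` and `G(z)`.
-/

noncomputable section

open Complex

/-- The `n`-th factor (`n ≥ 1`) of the infinite product defining the Barnes G-function:
`(1 + z/n)^n exp(−z + z²/(2n))`. -/
def barnesFactor (z : ℂ) (n : ℕ) : ℂ :=
  (1 + z / ((n : ℂ) + 1)) ^ (n + 1) * Complex.exp (-z + z ^ 2 / (2 * ((n : ℂ) + 1)))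

/-- The Barnes G-function, defined by
`G(z+1) = (2π)^{z/2} exp(−((γ+1)z² + z)/2) ∏_{n=1}^{∞} (1 + z/n)^n exp(−z + z²/(2n))`,
with principal-branch complex powers. -/
def BarnesG (w : ℂ) : ℂ :=
  (2 * (Real.pi : ℂ)) ^ ((w - 1) / 2) *
    Complex.exp (-(((Real.eulerMascheroniConstant + 1) * (w - 1) ^ 2 + (w - 1)) / 2)) *
    ∏' n : ℕ, barnesFactor (w - 1) n

open Filter Topology Finset Asymptotics
open scoped Nat

lemma logTaylor_three (w : ℂ) : logTaylor 3 w = w - w ^ 2 / 2 := by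
  norm_num [logTaylor_succ, logTaylor_zero]
  ring

lemma barnesFactor_eq_exp (z : ℂ) (n : ℕ) (h : 1 + z / ((n : ℂ) + 1) ≠ 0) :
    barnesFactor z n = exp (((n : ℂ) + 1) *
      (log (1 + z / ((n : ℂ) + 1)) - logTaylor 3 (z / ((n : ℂ) + 1)))) := by
  rw [barnesFactor, ← exp_log h, ← exp_nat_mul, exp_log h, ← exp_add, logTaylor_three]
  congr 1
  push_cast
  field_simp
  ring

lemma isBigO_barnesFactor_sub_one (z : ℂ) :
    (fun n ↦ barnesFactor z n - 1) =O[atTop] fun n : ℕ ↦ 1 / ((n : ℝ) + 1) ^ 2 := by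
  set w : ℕ → ℂ := fun n ↦ z / ((n : ℂ) + 1) with hw_def
  set E : ℕ → ℂ := fun n ↦ ((n : ℂ) + 1) * (log (1 + w n) - logTaylor 3 (w n))
  have hw : Tendsto w atTop (𝓝 0) := by
    simpa [w, div_eq_mul_one_div z] using
      (tendsto_one_div_add_atTop_nhds_zero_nat (𝕜 := ℂ)).const_mul z
  have hE : E =O[atTop] fun n : ℕ ↦ 1 / ((n : ℝ) + 1) ^ 2 := by
    refine ((isBigO_refl (fun n : ℕ ↦ (n : ℂ) + 1) atTop).mul
      ((log_sub_logTaylor_isBigO 2).comp_tendsto hw)).trans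
      (IsBigO.of_bound (‖z‖ ^ 3) (Eventually.of_forall fun n ↦ ?_))
    have : ((n : ℂ) + 1) * w n ^ 3 = z ^ 3 * ((1 / ((n : ℝ) + 1) ^ 2 : ℝ) : ℂ) := by
      push_cast [hw_def]
      field_simp
    rw [Function.comp_apply, this, norm_mul, norm_pow, norm_real]
  have hE0 : Tendsto E atTop (𝓝 0) := hE.trans_tendsto <| by
    simpa using (tendsto_one_div_add_atTop_nhds_zero_nat (𝕜 := ℝ)).pow 2
  have hfactor : (fun n ↦ barnesFactor z n - 1) =ᶠ[atTop] fun n ↦ exp (E n) - exp 0 := by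
    filter_upwards [hw.eventually_ne (show (0 : ℂ) ≠ -1 by norm_num)] with n hn
    rw [exp_zero, barnesFactor_eq_exp z n fun h ↦ hn (eq_neg_of_add_eq_zero_right h)]
  exact hfactor.isBigO.trans <|
    ((hasDerivAt_exp 0).isBigO_sub.comp_tendsto hE0).trans
      (by simpa [Function.comp_def] using hE)

lemma multipliable_barnesFactor (z : ℂ) : Multipliable (barnesFactor z) := by
  have hsum : Summable fun n : ℕ ↦ 1 / ((n : ℝ) + 1) ^ 2 := by
    simpa using (summable_nat_add_iff 1).mpr (Real.summable_one_div_nat_pow.mpr one_lt_two)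
  simpa using Complex.multipliable_one_add_of_summable
    (summable_of_isBigO_nat hsum (isBigO_barnesFactor_sub_one z))

lemma barnesFactor_eq_barnesFactor_sub_one_mul (z : ℂ) (n : ℕ) (hn : z + n ≠ 0) :
    barnesFactor z n = barnesFactor (z - 1) n *
      (((z + n + 1) / (z + n)) ^ (n + 1) * exp (-1 + (z - 1 / 2) / (n + 1))) := by
  have hbase : 1 + z / (n + 1) = (1 + (z - 1) / (n + 1)) * ((z + n + 1) / (z + n)) := by
    field_simp
    ring
  have harg : -z + z ^ 2 / (2 * (n + 1)) =
      -(z - 1) + (z - 1) ^ 2 / (2 * (n + 1)) + (-1 + (z - 1 / 2) / (n + 1)) := by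
    field_simp
    ring
  rw [barnesFactor, barnesFactor, hbase, mul_pow, harg, exp_add]
  ring

lemma prod_range_div_pow_mul_prod {K : Type*} [Field K] {a : ℕ → K} (ha : ∀ n, a n ≠ 0)
    (N : ℕ) : (∏ n ∈ range N, (a (n + 1) / a n) ^ (n + 1)) * ∏ n ∈ range N, a n = a N ^ N := by
  induction N with
  | zero => simp
  | succ N ih =>
    have haN := ha N
    rw [prod_range_succ, prod_range_succ, mul_mul_mul_comm, ih, div_pow, pow_succ (a N)]
    field_simp

lemma sum_range_neg_one_add_div {K : Type*} [Field K] [CharZero K] (c : K) (N : ℕ) :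
    ∑ n ∈ range N, (-1 + c / (n + 1)) = -N + c * harmonic N := by
  simp [sum_add_distrib, harmonic, mul_sum, div_eq_mul_inv]

def barnesQuotient (z : ℂ) (N : ℕ) : ℂ :=
  (z + N) ^ N / (∏ j ∈ range N, (z + j)) * exp (-N + (z - 1 / 2) * harmonic N)

lemma prod_range_barnesFactor (z : ℂ) (hz : ∀ j : ℕ, z + j ≠ 0) (N : ℕ) :
    ∏ n ∈ range N, barnesFactor z n =
      (∏ n ∈ range N, barnesFactor (z - 1) n) * barnesQuotient z N := by
  have htel := prod_range_div_pow_mul_prod (a := fun n : ℕ ↦ z + n) hz N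
  push_cast at htel
  rw [prod_congr rfl fun n _ ↦ barnesFactor_eq_barnesFactor_sub_one_mul z n (hz n),
    prod_mul_distrib, prod_mul_distrib, ← exp_sum, sum_range_neg_one_add_div, barnesQuotient,
    ← htel, mul_div_cancel_right₀ _ (prod_ne_zero_iff.mpr fun j _ ↦ hz j)]
  simp only [add_assoc]

lemma ofReal_sqrt_natCast {N : ℕ} (hN : N ≠ 0) : ((√N : ℝ) : ℂ) = exp (log N / 2) := by
  rw [Real.sqrt_eq_rpow, Real.rpow_def_of_pos (by positivity), ofReal_exp]
  push_cast
  ring_nf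

lemma barnesQuotient_eq_GammaSeq_mul (z : ℂ) (hz : ∀ j : ℕ, z + j ≠ 0) {N : ℕ} (hN : N ≠ 0) :
    barnesQuotient z N =
      GammaSeq z N * (1 + z / N) ^ (N + 1) * exp ((z - 1 / 2) * (harmonic N - log N)) *
        ((√N * N ^ N * Real.exp (-N) / N ! : ℝ) : ℂ) := by
  have hN' : (N : ℂ) ≠ 0 := Nat.cast_ne_zero.mpr hN
  have hfact : (N ! : ℂ) ≠ 0 := Nat.cast_ne_zero.mpr N.factorial_ne_zero
  have hzN : z + N ≠ 0 := hz N
  have hone : 1 + z / N = (z + N) / N := by field_simp; ring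
  have hexp : exp ((z - 1 / 2) * harmonic N) =
      exp (log N * z) * exp ((z - 1 / 2) * (harmonic N - log N)) * exp (log N / 2) / N := by
    rw [eq_div_iff hN', ← exp_add, ← exp_add, ← exp_log hN', ← exp_add, exp_log hN']
    ring_nf
  rw [barnesQuotient, GammaSeq, cpow_def_of_ne_zero hN', prod_range_succ, exp_add, hone, div_pow,
    hexp]
  push_cast
  rw [ofReal_sqrt_natCast hN]
  field_simp
  ring

lemma tendsto_sqrt_mul_pow_mul_exp_neg_div_factorial :
    Tendsto (fun N : ℕ ↦ √N * N ^ N * Real.exp (-N) / N !) atTop (𝓝 (√(2 * Real.pi))⁻¹) := by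
  have hlim : Tendsto (fun N : ℕ ↦ (√2 * Stirling.stirlingSeq N)⁻¹) atTop
      (𝓝 (√(2 * Real.pi))⁻¹) := by
    rw [Real.sqrt_mul zero_le_two]
    exact (tendsto_const_nhds.mul Stirling.tendsto_stirlingSeq_sqrt_pi).inv₀ (by positivity)
  refine hlim.congr' ?_
  filter_upwards [eventually_ne_atTop 0] with N hN
  rw [Stirling.stirlingSeq, Real.sqrt_mul zero_le_two, div_pow, Real.exp_neg, ← Real.exp_nat_mul,
    mul_one]
  field_simp

lemma tendsto_exp_mul_harmonic_sub_log (c : ℂ) :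
    Tendsto (fun N : ℕ ↦ exp (c * (harmonic N - log N))) atTop
      (𝓝 (exp (c * Real.eulerMascheroniConstant))) := by
  have h := (continuous_ofReal.tendsto _).comp Real.tendsto_harmonic_sub_log
  refine ((continuous_exp.tendsto _).comp (h.const_mul c)).congr fun N ↦ ?_
  simp [natCast_log]

lemma tendsto_one_add_div_pow_succ (z : ℂ) :
    Tendsto (fun N : ℕ ↦ (1 + z / N) ^ (N + 1)) atTop (𝓝 (exp z)) := by
  have h : Tendsto (fun N : ℕ ↦ 1 + z / N) atTop (𝓝 1) := by
    simpa using (tendsto_const_div_atTop_nhds_zero_nat z).const_add 1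
  simpa [pow_succ] using (tendsto_one_add_div_pow_exp z).mul h

lemma tendsto_barnesQuotient (z : ℂ) (hz : ∀ j : ℕ, z + j ≠ 0) :
    Tendsto (barnesQuotient z) atTop (𝓝 (Gamma z * exp z *
      exp ((z - 1 / 2) * Real.eulerMascheroniConstant) * ((√(2 * Real.pi))⁻¹ : ℝ))) := by
  have h := (((GammaSeq_tendsto_Gamma z).mul (tendsto_one_add_div_pow_succ z)).mul
    (tendsto_exp_mul_harmonic_sub_log (z - 1 / 2))).mul
    ((continuous_ofReal.tendsto _).comp tendsto_sqrt_mul_pow_mul_exp_neg_div_factorial)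
  refine h.congr' ?_
  filter_upwards [eventually_ne_atTop 0] with N hN
  exact (barnesQuotient_eq_GammaSeq_mul z hz hN).symm

lemma tprod_barnesFactor_eq (z : ℂ) (hz : ∀ j : ℕ, z + j ≠ 0) :
    ∏' n, barnesFactor z n = (∏' n, barnesFactor (z - 1) n) * (Gamma z * exp z *
      exp ((z - 1 / 2) * Real.eulerMascheroniConstant) * ((√(2 * Real.pi))⁻¹ : ℝ)) :=
  tendsto_nhds_unique (multipliable_barnesFactor z).hasProd.tendsto_prod_nat <|
    ((multipliable_barnesFactor (z - 1)).hasProd.tendsto_prod_nat.mul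
      (tendsto_barnesQuotient z hz)).congr fun N ↦ (prod_range_barnesFactor z hz N).symm

lemma two_mul_pi_cpow_one_half :
    (2 * (Real.pi : ℂ)) ^ (1 / 2 : ℂ) = ((√(2 * Real.pi) : ℝ) : ℂ) := by
  rw [Real.sqrt_eq_rpow, ofReal_cpow (by positivity)]
  push_cast
  rfl

/-- the Barnes G-function satisfies `G(z+1) = Γ(z)·G(z)` for every complex `z`
which is not a nonpositive integer. -/
theorem barnesG_functional_equation (z : ℂ) (hz : ∀ n : ℕ, z ≠ -(n : ℂ)) :
    BarnesG (z + 1) = Complex.Gamma z * BarnesG z := by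
  have hz' : ∀ j : ℕ, z + j ≠ 0 := fun j h ↦ hz j (eq_neg_of_add_eq_zero_left h)
  have h2pi : (2 * (Real.pi : ℂ)) ≠ 0 := by simp [Real.pi_ne_zero]
  have hexp : exp (-(((Real.eulerMascheroniConstant + 1) * z ^ 2 + z) / 2)) *
      (exp z * exp ((z - 1 / 2) * Real.eulerMascheroniConstant)) =
      exp (-(((Real.eulerMascheroniConstant + 1) * (z - 1) ^ 2 + (z - 1)) / 2)) := by
    rw [← exp_add, ← exp_add]
    ring_nf
  rw [BarnesG, BarnesG, add_sub_cancel_right, tprod_barnesFactor_eq z hz', ← hexp,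
    show z / 2 = (z - 1) / 2 + 1 / 2 by ring, cpow_add _ _ h2pi, two_mul_pi_cpow_one_half]
  push_cast
  field_simp
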